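/- Let A be a residuated lattice, F a filter of A, and let I, J be lattice ideals of A. Then ω_F(I) ∩ ω_F(J) = ω_F(I ∩ J), and ω_F(K), where K is the lattice ideal generated by I ∪ J, is the smallest ω_F-filter containing both ω_F(I) and ω_F(J). Consequently the set Ω_F(A) of all ω_F-filters, ordered by inclusion, is a bounded distributive lattice with least element F and greatest element A. -/

import Mathlib

class ResiduatedLattice (α : Type*) extends Lattice α, CommMonoid α, BoundedOrder α where
  rimp : α → α → α
  one_eq_top : (1 : α) = ⊤
  adjunction : ∀ x y z : α, x * y ≤ z ↔ x ≤ rimp y z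

variable {α : Type*} [ResiduatedLattice α]

/-- A filter of a residuated lattice: nonempty, closed under `⊙` and upward closed. -/
def IsFilter (F : Set α) : Prop :=
  F.Nonempty ∧ (∀ x ∈ F, ∀ y ∈ F, x * y ∈ F) ∧ ∀ x ∈ F, ∀ y : α, x ≤ y → y ∈ F

/-- A prime filter: a proper filter such that `x ⊔ y ∈ P` implies `x ∈ P` or `y ∈ P`. -/
def IsPrimeFilter (P : Set α) : Prop :=
  IsFilter P ∧ P ≠ Set.univ ∧ ∀ x y : α, x ⊔ y ∈ P → x ∈ P ∨ y ∈ P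

/-- A `∨`-closed subset: nonempty and closed under join. -/
def IsJoinClosed (C : Set α) : Prop :=
  C.Nonempty ∧ ∀ x ∈ C, ∀ y ∈ C, x ⊔ y ∈ C

/-- The filter generated by a set. -/
def filterGen (X : Set α) : Set α := ⋂₀ {G : Set α | IsFilter G ∧ X ⊆ G}

/-- An `X`-minimal prime filter: prime, contains `X`, minimal among primes containing `X`. -/
def IsMinPrimeOver (X P : Set α) : Prop :=
  IsPrimeFilter P ∧ X ⊆ P ∧ ∀ Q : Set α, IsPrimeFilter Q → X ⊆ Q → Q ⊆ P → Q = P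

/-- `ω_F(X) = {a | x ∨ a ∈ F for some x ∈ X}`. -/
def omegaF (F X : Set α) : Set α := {a : α | ∃ x ∈ X, x ⊔ a ∈ F}

/-- The coannihilator `(F : x) = {a | x ∨ a ∈ F}`. -/
def coann (F : Set α) (x : α) : Set α := {a : α | x ⊔ a ∈ F}

/-- `D_F(H) = {a | x ∨ a ∈ F for some x ∉ H}`, the set of `F`-divisors of `H`. -/
def divisorsF (F H : Set α) : Set α := {a : α | ∃ x ∉ H, x ⊔ a ∈ F}

/-- A lattice ideal: nonempty, closed under join and downward closed. -/
def IsLatticeIdeal (I : Set α) : Prop :=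
  I.Nonempty ∧ (∀ x ∈ I, ∀ y ∈ I, x ⊔ y ∈ I) ∧ ∀ x y : α, x ≤ y → y ∈ I → x ∈ I

/-- The lattice ideal generated by a set. -/
def idealGen (X : Set α) : Set α := ⋂₀ {I : Set α | IsLatticeIdeal I ∧ X ⊆ I}

/-- An `ω_F`-filter: a filter of the form `ω_F(I)` for some lattice ideal `I`. -/
def IsOmegaFilter (F H : Set α) : Prop :=
  IsFilter H ∧ ∃ I : Set α, IsLatticeIdeal I ∧ H = omegaF F I

/-!
Everything rests on the inequality `(x ⊔ a) ⊙ (y ⊔ b) ≤ (x ⊙ y) ⊔ a ⊔ b`, which holds because `⊙`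
distributes over `⊔` and lies below both factors. Multiplying witnesses `x ⊔ a ∈ F` and
`y ⊔ a ∈ F` gives a witness `x ⊙ y ⊔ a ∈ F` with `x ⊙ y` below both `x` and `y`; this yields the
intersection formula and, together with `z ⊙ (y ⊔ k) ≤ z ⊙ y ⊔ z ⊙ k`, distributivity. For the
least upper bound, the ideal generated by `I ∪ J` consists of the elements below some `y ⊔ k`
with `y ∈ I`, `k ∈ J`; if `ω_F(I), ω_F(J) ⊆ ω_F(K)`, a witness `y ⊔ k ⊔ a ∈ F` is traded for
one from `K` in two steps, replacing first `y` and then `k` by elements of `K`.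
-/

namespace ResiduatedLattice

variable {x y z a b : α}

theorem mul_le_iff_le_rimp : x * y ≤ z ↔ x ≤ rimp y z :=
  adjunction x y z

theorem mul_le_left (x y : α) : x * y ≤ x := by
  rw [mul_comm, mul_le_iff_le_rimp]
  calc y ≤ 1 := (one_eq_top (α := α)).symm ▸ le_top
    _ ≤ rimp x x := mul_le_iff_le_rimp.mp (one_mul x).le

theorem mul_le_right (x y : α) : x * y ≤ y :=
  mul_comm x y ▸ mul_le_left y x

theorem sup_mul_le : (x ⊔ y) * z ≤ x * z ⊔ y * z := by
  rw [mul_le_iff_le_rimp]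
  exact sup_le (mul_le_iff_le_rimp.mp le_sup_left) (mul_le_iff_le_rimp.mp le_sup_right)

theorem mul_sup_le : z * (x ⊔ y) ≤ z * x ⊔ z * y := by
  simpa only [mul_comm z] using sup_mul_le

theorem sup_mul_sup_le (x y a b : α) : (x ⊔ a) * (y ⊔ b) ≤ x * y ⊔ (a ⊔ b) :=
  calc (x ⊔ a) * (y ⊔ b) ≤ (x * y ⊔ a * y) ⊔ (x * b ⊔ a * b) :=
        mul_sup_le.trans (sup_le_sup sup_mul_le sup_mul_le)
    _ ≤ x * y ⊔ (a ⊔ b) :=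
        sup_le (sup_le_sup_left (mul_le_left a y |>.trans le_sup_left) _)
          (sup_le ((mul_le_right x b).trans (le_sup_right.trans le_sup_right))
            ((mul_le_left a b).trans (le_sup_left.trans le_sup_right)))

end ResiduatedLattice

open ResiduatedLattice

namespace IsFilter

variable {F : Set α}

theorem top_mem (hF : IsFilter F) : (⊤ : α) ∈ F :=
  let ⟨x, hx⟩ := hF.1
  hF.2.2 x hx ⊤ le_top

theorem mem_of_le (hF : IsFilter F) {x y : α} (hx : x ∈ F) (hxy : x ≤ y) : y ∈ F :=
  hF.2.2 x hx y hxy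

theorem sup_mul_mem (hF : IsFilter F) {x y a b : α} (hx : x ⊔ a ∈ F) (hy : y ⊔ b ∈ F) :
    x * y ⊔ (a ⊔ b) ∈ F :=
  hF.mem_of_le (hF.2.1 _ hx _ hy) (sup_mul_sup_le x y a b)

end IsFilter

namespace IsLatticeIdeal

variable {I : Set α}

theorem isJoinClosed (hI : IsLatticeIdeal I) : IsJoinClosed I :=
  ⟨hI.1, hI.2.1⟩

theorem isLowerSet (hI : IsLatticeIdeal I) : IsLowerSet I :=
  fun _ _ hba ha => hI.2.2 _ _ hba ha

theorem bot_mem (hI : IsLatticeIdeal I) : (⊥ : α) ∈ I :=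
  let ⟨_, hx⟩ := hI.1
  hI.isLowerSet bot_le hx

end IsLatticeIdeal

theorem isLatticeIdeal_singleton_bot : IsLatticeIdeal ({⊥} : Set α) :=
  ⟨Set.singleton_nonempty ⊥, by rintro x rfl y rfl; simp,
    by rintro x y hxy rfl; exact le_bot_iff.mp hxy⟩

theorem isLatticeIdeal_univ : IsLatticeIdeal (Set.univ : Set α) :=
  ⟨Set.univ_nonempty, fun _ _ _ _ => trivial, fun _ _ _ _ => trivial⟩

theorem isFilter_univ : IsFilter (Set.univ : Set α) :=
  ⟨Set.univ_nonempty, fun _ _ _ _ => trivial, fun _ _ _ _ => trivial⟩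

section IdealGen

variable {X Y : Set α}

theorem subset_idealGen : X ⊆ idealGen X :=
  Set.subset_sInter fun _ hI => hI.2

theorem idealGen_subset {I : Set α} (hI : IsLatticeIdeal I) (h : X ⊆ I) : idealGen X ⊆ I :=
  Set.sInter_subset_of_mem ⟨hI, h⟩

theorem idealGen_mono (h : X ⊆ Y) : idealGen X ⊆ idealGen Y :=
  Set.sInter_subset_sInter fun _ hI => ⟨hI.1, h.trans hI.2⟩

theorem isLatticeIdeal_idealGen (X : Set α) : IsLatticeIdeal (idealGen X) :=
  ⟨⟨⊥, fun _ hI => hI.1.bot_mem⟩, fun x hx y hy I hI => hI.1.2.1 x (hx I hI) y (hy I hI),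
    fun x y hxy hy I hI => hI.1.2.2 x y hxy (hy I hI)⟩

theorem exists_le_sup_of_mem_idealGen_union {I J : Set α} (hI : IsLatticeIdeal I)
    (hJ : IsLatticeIdeal J) {w : α} (hw : w ∈ idealGen (I ∪ J)) :
    ∃ y ∈ I, ∃ k ∈ J, w ≤ y ⊔ k := by
  refine idealGen_subset (I := {w | ∃ y ∈ I, ∃ k ∈ J, w ≤ y ⊔ k}) ⟨?_, ?_, ?_⟩ ?_ hw
  · exact ⟨⊥, ⊥, hI.bot_mem, ⊥, hJ.bot_mem, bot_le⟩
  · rintro a ⟨y, hy, k, hk, ha⟩ b ⟨y', hy', k', hk', hb⟩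
    exact ⟨y ⊔ y', hI.2.1 _ hy _ hy', k ⊔ k', hJ.2.1 _ hk _ hk',
      sup_le (ha.trans (sup_le_sup le_sup_left le_sup_left))
        (hb.trans (sup_le_sup le_sup_right le_sup_right))⟩
  · rintro a b hab ⟨y, hy, k, hk, hb⟩
    exact ⟨y, hy, k, hk, hab.trans hb⟩
  · rintro w (hw | hw)
    · exact ⟨w, hw, ⊥, hJ.bot_mem, le_sup_left⟩
    · exact ⟨⊥, hI.bot_mem, w, hw, le_sup_right⟩

end IdealGen

section OmegaF

variable {F I J : Set α}

theorem omegaF_mono (h : I ⊆ J) : omegaF F I ⊆ omegaF F J :=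
  fun _ ⟨x, hx, hxa⟩ => ⟨x, h hx, hxa⟩

theorem isFilter_omegaF (hF : IsFilter F) (hI : IsJoinClosed I) : IsFilter (omegaF F I) := by
  obtain ⟨x₀, hx₀⟩ := hI.1
  refine ⟨⟨⊤, x₀, hx₀, by simpa using hF.top_mem⟩, ?_, ?_⟩
  · rintro a ⟨x, hx, hxa⟩ b ⟨y, hy, hyb⟩
    refine ⟨x ⊔ y, hI.2 x hx y hy, ?_⟩
    rw [sup_comm x] at hxa
    rw [sup_comm y] at hyb
    simpa only [sup_comm] using hF.sup_mul_mem hxa hyb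
  · rintro a ⟨x, hx, hxa⟩ b hab
    exact ⟨x, hx, hF.mem_of_le hxa (sup_le_sup_left hab x)⟩

theorem subset_omegaF (hF : IsFilter F) (hI : I.Nonempty) : F ⊆ omegaF F I :=
  let ⟨x, hx⟩ := hI
  fun _ ha => ⟨x, hx, hF.mem_of_le ha le_sup_right⟩

theorem omegaF_singleton_bot : omegaF F {⊥} = F := by
  ext a
  simp [omegaF]

theorem omegaF_univ (hF : IsFilter F) : omegaF F Set.univ = Set.univ :=
  Set.eq_univ_of_forall fun _ => ⟨⊤, trivial, by simpa using hF.top_mem⟩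

theorem omegaF_inter (hF : IsFilter F) (hI : IsLowerSet I) (hJ : IsLowerSet J) :
    omegaF F I ∩ omegaF F J = omegaF F (I ∩ J) := by
  refine Set.Subset.antisymm ?_ (Set.subset_inter (omegaF_mono Set.inter_subset_left)
    (omegaF_mono Set.inter_subset_right))
  rintro a ⟨⟨x, hx, hxa⟩, y, hy, hya⟩
  exact ⟨x * y, ⟨hI (mul_le_left x y) hx, hJ (mul_le_right x y) hy⟩,
    sup_idem a ▸ hF.sup_mul_mem hxa hya⟩

theorem omegaF_idealGen_union_subset (hF : IsFilter F) (hI : IsLatticeIdeal I)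
    (hJ : IsLatticeIdeal J) {K : Set α} (hK : IsJoinClosed K) (hIK : omegaF F I ⊆ omegaF F K)
    (hJK : omegaF F J ⊆ omegaF F K) : omegaF F (idealGen (I ∪ J)) ⊆ omegaF F K := by
  rintro a ⟨w, hw, hwa⟩
  obtain ⟨y, hy, k, hk, hw_le⟩ := exists_le_sup_of_mem_idealGen_union hI hJ hw
  have hyka : y ⊔ (k ⊔ a) ∈ F := sup_assoc y k a ▸ hF.mem_of_le hwa (sup_le_sup_right hw_le a)
  obtain ⟨m, hm, hmka⟩ := hIK ⟨y, hy, hyka⟩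
  have hkma : k ⊔ (m ⊔ a) ∈ F := sup_left_comm m k a ▸ hmka
  obtain ⟨m', hm', hm'ma⟩ := hJK ⟨k, hk, hkma⟩
  exact ⟨m' ⊔ m, hK.2 _ hm' _ hm, (sup_assoc m' m a).symm ▸ hm'ma⟩

theorem omegaF_inter_idealGen_union (hF : IsFilter F) (hI : IsLatticeIdeal I)
    (hJ : IsLatticeIdeal J) {K : Set α} (hK : IsLatticeIdeal K) :
    omegaF F I ∩ omegaF F (idealGen (J ∪ K)) = omegaF F (idealGen ((I ∩ J) ∪ (I ∩ K))) := by
  refine Set.Subset.antisymm ?_ (Set.subset_inter (omegaF_mono ?_) (omegaF_mono ?_))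
  · rintro a ⟨⟨z, hz, hza⟩, w, hw, hwa⟩
    obtain ⟨y, hy, k, hk, hw_le⟩ := exists_le_sup_of_mem_idealGen_union hJ hK hw
    have hzy : z * y ∈ idealGen ((I ∩ J) ∪ (I ∩ K)) :=
      subset_idealGen <| Or.inl
        ⟨hI.isLowerSet (mul_le_left z y) hz, hJ.isLowerSet (mul_le_right z y) hy⟩
    have hzk : z * k ∈ idealGen ((I ∩ J) ∪ (I ∩ K)) :=
      subset_idealGen <| Or.inr
        ⟨hI.isLowerSet (mul_le_left z k) hz, hK.isLowerSet (mul_le_right z k) hk⟩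
    have hyka : (y ⊔ k) ⊔ a ∈ F := hF.mem_of_le hwa (sup_le_sup_right hw_le a)
    refine ⟨z * y ⊔ z * k, (isLatticeIdeal_idealGen _).2.1 _ hzy _ hzk, ?_⟩
    exact hF.mem_of_le (sup_idem a ▸ hF.sup_mul_mem hza hyka) (sup_le_sup_right mul_sup_le a)
  · exact idealGen_subset hI (Set.union_subset Set.inter_subset_left Set.inter_subset_left)
  · exact idealGen_mono (Set.union_subset_union Set.inter_subset_right Set.inter_subset_right)

end OmegaF

/-- Proposition 3.6: `ω_F(I) ∩ ω_F(J) = ω_F(I ∩ J)`; `ω_F` of the ideal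
generated by `I ∪ J` is the least `ω_F`-filter containing `ω_F(I)` and `ω_F(J)`; and the
`ω_F`-filters form a bounded distributive lattice with least element `F` and greatest
element `A`. -/
theorem stmt_6 (F I J : Set α) (hF : IsFilter F)
    (hI : IsLatticeIdeal I) (hJ : IsLatticeIdeal J) :
    omegaF F I ∩ omegaF F J = omegaF F (I ∩ J) ∧
    IsLeast {H : Set α | IsOmegaFilter F H ∧ omegaF F I ⊆ H ∧ omegaF F J ⊆ H}
      (omegaF F (idealGen (I ∪ J))) ∧
    (IsOmegaFilter F F ∧ IsOmegaFilter F (Set.univ : Set α) ∧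
      ∀ H : Set α, IsOmegaFilter F H → F ⊆ H) ∧
    (∀ K : Set α, IsLatticeIdeal K →
      omegaF F I ∩ omegaF F (idealGen (J ∪ K)) =
        omegaF F (idealGen ((I ∩ J) ∪ (I ∩ K)))) := by
  have hGen := isLatticeIdeal_idealGen (I ∪ J)
  refine ⟨omegaF_inter hF hI.isLowerSet hJ.isLowerSet, ⟨?_, ?_⟩, ⟨?_, ?_, ?_⟩,
    fun K hK => omegaF_inter_idealGen_union hF hI hJ hK⟩
  · exact ⟨⟨isFilter_omegaF hF hGen.isJoinClosed, _, hGen, rfl⟩,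
      omegaF_mono (Set.subset_union_left.trans subset_idealGen),
      omegaF_mono (Set.subset_union_right.trans subset_idealGen)⟩
  · rintro H ⟨⟨-, K, hK, rfl⟩, hIK, hJK⟩
    exact omegaF_idealGen_union_subset hF hI hJ hK.isJoinClosed hIK hJK
  · exact ⟨hF, {⊥}, isLatticeIdeal_singleton_bot, omegaF_singleton_bot.symm⟩
  · exact ⟨isFilter_univ, Set.univ, isLatticeIdeal_univ, (omegaF_univ hF).symm⟩
  · rintro H ⟨-, K, hK, rfl⟩
    exact subset_omegaF hF hK.1
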